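/- arXiv:1209.1829 — 6 statements merged into one kernel-verified Lean document; each statement's English description precedes it below -/
import Mathlib

section
/- Let X be a metric space, G a compact metric topological group, and A : G × X → X a continuous group action of G on X by homeomorphisms. Let (C, d) be a metric compactification of X, i.e. a compact metric space together with a topological embedding e : X → C with dense image. Suppose that for every g ∈ G the map x ↦ A(g,x) extends continuously to C, i.e. there is a continuous map Âg : C → C with Âg ∘ e = e ∘ A(g,·) (such an extension is unique since e has dense image). Then the map Â : G × C → C, Â(g,c) = Âg(c), is a continuous group action of G on C: Â is jointly continuous, Â(e_G, c) = c for all c ∈ C, and Â(g h, c) = Â(g, Â(h, c)) for all g, h ∈ G and c ∈ C. -/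
/-!
Each orbit map `g ↦ Ahat g c` is the pointwise limit of the continuous maps `g ↦ e (A g xₙ)`
with `e xₙ → c`, hence Borel. Averaging over a right-invariant Haar measure `μ` of `G` then
produces jointly continuous observables: for `q ∈ C` and a bounded continuous weight `w ≥ 0`,
`F z = ∫ dist (g • z) q * w g ∂μ` satisfies `F (s • z) = ∫ dist (g • z) q * w (g * s⁻¹) ∂μ`, and the
right-hand side is continuous in `(s, z)` by dominated convergence. These observables separate
points: if they agree at `a` and `b`, then for almost every `g` the points `g • a` and `g • b`
have the same distances to a dense sequence, so `a = b`. Hence the graph of the action is an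
intersection of closed sets, and a map into a compact space with closed graph is continuous.
-/

open Filter MeasureTheory Topology
open scoped NNReal BoundedContinuousFunction

theorem continuous_of_isClosed_graph {X Y : Type*} [TopologicalSpace X] [TopologicalSpace Y]
    [CompactSpace Y] {f : X → Y} (hf : IsClosed {p : X × Y | p.2 = f p.1}) : Continuous f := by
  refine continuous_iff_isClosed.2 fun s hs => ?_
  have : f ⁻¹' s = Prod.fst '' ({p : X × Y | p.2 = f p.1} ∩ Set.univ ×ˢ s) := by
    ext x
    simp
  rw [this]
  exact isClosedMap_fst_of_compactSpace _ (hf.inter (isClosed_univ.prod hs))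

theorem ae_eq_zero_of_forall_integral_mul_eq_zero {Ω : Type*} [MeasurableSpace Ω]
    [TopologicalSpace Ω] [HasOuterApproxClosed Ω] [BorelSpace Ω] {μ : Measure Ω} {f : Ω → ℝ}
    (hf : Integrable f μ) (h : ∀ w : Ω →ᵇ ℝ≥0, ∫ x, f x * w x ∂μ = 0) : f =ᵐ[μ] 0 := by
  refine ae_eq_zero_of_forall_setIntegral_isClosed_eq_zero hf fun s hs => ?_
  have hlim : Tendsto (fun n => ∫ x, f x * hs.apprSeq n x ∂μ) atTop (𝓝 (∫ x in s, f x ∂μ)) := by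
    rw [← integral_indicator hs.measurableSet]
    refine tendsto_integral_of_dominated_convergence (fun x => ‖f x‖)
      (fun n => hf.aestronglyMeasurable.mul
        (hs.apprSeq n).continuous.measurable.coe_nnreal_real.aestronglyMeasurable)
      hf.norm (fun n => ae_of_all _ fun x => ?_) (ae_of_all _ fun x => ?_)
    · rw [norm_mul]
      refine mul_le_of_le_one_right (norm_nonneg _) ?_
      simpa using HasOuterApproxClosed.apprSeq_apply_le_one hs n x
    · have := (NNReal.continuous_coe.tendsto _).comp
        (tendsto_pi_nhds.1 (HasOuterApproxClosed.tendsto_apprSeq hs) x)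
      have hind : s.indicator f x = f x * NNReal.toReal (s.indicator (fun _ => 1) x) := by
        by_cases hx : x ∈ s <;> simp [hx]
      rw [hind]
      exact tendsto_const_nhds.mul this
  simp only [h, tendsto_const_nhds_iff] at hlim
  exact hlim.symm

theorem eq_of_forall_dist_eq_of_denseRange {C ι : Type*} [MetricSpace C] {q : ι → C}
    (hq : DenseRange q) {a b : C} (h : ∀ j, dist a (q j) = dist b (q j)) : a = b := by
  refine dist_le_zero.1 (le_of_forall_pos_le_add fun ε hε => ?_)
  obtain ⟨j, hj⟩ := hq.exists_dist_lt a (half_pos hε)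
  calc dist a b ≤ dist a (q j) + dist b (q j) := dist_triangle_right _ _ _
    _ ≤ 0 + ε := by rw [← h j]; linarith

theorem norm_dist_mul_le_diam_mul {X C : Type*} [TopologicalSpace X] [MetricSpace C] [CompactSpace C]
    (w : X →ᵇ ℝ≥0) (a b : C) (x : X) :
    ‖dist a b * (w x : ℝ)‖ ≤ Metric.diam (Set.univ : Set C) * nndist w 0 := by
  rw [norm_mul, Real.norm_of_nonneg dist_nonneg, NNReal.norm_eq]
  exact mul_le_mul (Metric.dist_le_diam_of_mem isCompact_univ.isBounded trivial trivial)
    (BoundedContinuousFunction.NNReal.upper_bound w x) (w x).2 Metric.diam_nonneg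

section OrbitDistIntegral

variable {G C : Type*} [Group G] [TopologicalSpace G] [MeasurableSpace G]
  [MetricSpace C] [MulAction G C]

noncomputable def orbitDistIntegral (μ : Measure G) (q : C) (w : G →ᵇ ℝ≥0) (z : C) : ℝ :=
  ∫ g, dist (g • z) q * w g ∂μ

variable {μ : Measure G}

theorem orbitDistIntegral_smul [MeasurableMul G] [μ.IsMulRightInvariant] (q : C)
    (w : G →ᵇ ℝ≥0) (s : G) (z : C) :
    orbitDistIntegral μ q w (s • z) = ∫ g, dist (g • z) q * w (g * s⁻¹) ∂μ := by
  conv_rhs => rw [← integral_mul_right_eq_self _ s]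
  simp only [orbitDistIntegral, mul_smul, mul_inv_cancel_right]

variable [CompactSpace C] [MeasurableSpace C] [BorelSpace C]

theorem integrable_dist_smul_mul [IsFiniteMeasure μ] [OpensMeasurableSpace G] {z : C}
    (hz : Measurable fun g : G => g • z) (q : C) (w : G →ᵇ ℝ≥0) :
    Integrable (fun g => dist (g • z) q * w g) μ :=
  (integrable_const _).mono'
    ((hz.dist measurable_const).mul w.continuous.measurable.coe_nnreal_real).aestronglyMeasurable
    (ae_of_all _ fun g => norm_dist_mul_le_diam_mul w _ q g)

theorem continuous_orbitDistIntegral_smul [IsTopologicalGroup G] [FirstCountableTopology G]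
    [BorelSpace G] [IsFiniteMeasure μ] [μ.IsMulRightInvariant]
    (hcont : ∀ g : G, Continuous fun z : C => g • z)
    (hmeas : ∀ z : C, Measurable fun g : G => g • z) (q : C) (w : G →ᵇ ℝ≥0) :
    Continuous fun p : G × C => orbitDistIntegral μ q w (p.1 • p.2) := by
  simp only [orbitDistIntegral_smul]
  refine continuous_of_dominated (fun p => ?_)
    (fun p => ae_of_all _ fun g => norm_dist_mul_le_diam_mul w _ q _) (integrable_const _)
    (ae_of_all _ fun g => ?_)
  · exact (((hmeas p.2).dist measurable_const).mul
      (w.continuous.comp (continuous_mul_const _)).measurable.coe_nnreal_real).aestronglyMeasurable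
  · have := hcont g
    fun_prop

theorem continuous_orbitDistIntegral [IsTopologicalGroup G] [FirstCountableTopology G]
    [BorelSpace G] [IsFiniteMeasure μ] [μ.IsMulRightInvariant]
    (hcont : ∀ g : G, Continuous fun z : C => g • z)
    (hmeas : ∀ z : C, Measurable fun g : G => g • z) (q : C) (w : G →ᵇ ℝ≥0) :
    Continuous (orbitDistIntegral μ q w) := by
  simpa only [Function.comp_def, one_smul] using
    (continuous_orbitDistIntegral_smul (μ := μ) hcont hmeas q w).comp (Continuous.prodMk_right 1)

theorem eq_of_forall_orbitDistIntegral_eq [HasOuterApproxClosed G] [BorelSpace G]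
    [IsFiniteMeasure μ] [NeZero μ] (hmeas : ∀ z : C, Measurable fun g : G => g • z) {a b : C}
    (h : ∀ q w, orbitDistIntegral μ q w a = orbitDistIntegral μ q w b) : a = b := by
  have hae : ∀ q : C, ∀ᵐ g ∂μ, dist (g • a) q = dist (g • b) q := by
    intro q
    have hint : ∀ z, Integrable (fun g => dist (g • z) q) μ := fun z => by
      simpa using integrable_dist_smul_mul (μ := μ) (hmeas z) q 1
    have := ae_eq_zero_of_forall_integral_mul_eq_zero ((hint a).sub (hint b)) fun w => by
      simp only [Pi.sub_apply, sub_mul]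
      rw [integral_sub (integrable_dist_smul_mul (hmeas a) q w)
        (integrable_dist_smul_mul (hmeas b) q w)]
      exact sub_eq_zero.2 (h q w)
    filter_upwards [this] with g hg
    exact sub_eq_zero.1 hg
  have : Nonempty C := ⟨a⟩
  obtain ⟨g, hg⟩ := (ae_all_iff.2 fun j => hae (TopologicalSpace.denseSeq C j)).exists
  exact (smul_left_cancel_iff g).1
    (eq_of_forall_dist_eq_of_denseRange (TopologicalSpace.denseRange_denseSeq C) hg)

theorem isClosed_graph_smul [IsTopologicalGroup G] [FirstCountableTopology G]
    [HasOuterApproxClosed G] [BorelSpace G] [IsFiniteMeasure μ] [NeZero μ]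
    [μ.IsMulRightInvariant] (hcont : ∀ g : G, Continuous fun z : C => g • z)
    (hmeas : ∀ z : C, Measurable fun g : G => g • z) :
    IsClosed {p : (G × C) × C | p.2 = p.1.1 • p.1.2} := by
  have : {p : (G × C) × C | p.2 = p.1.1 • p.1.2} = ⋂ (q : C) (w : G →ᵇ ℝ≥0),
      {p | orbitDistIntegral μ q w p.2 = orbitDistIntegral μ q w (p.1.1 • p.1.2)} := by
    ext p
    simp only [Set.mem_ofPred_eq, Set.mem_iInter]
    exact ⟨fun h q w => congrArg _ h, eq_of_forall_orbitDistIntegral_eq hmeas⟩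
  rw [this]
  exact isClosed_iInter fun q => isClosed_iInter fun w =>
    isClosed_eq ((continuous_orbitDistIntegral hcont hmeas q w).comp continuous_snd)
      ((continuous_orbitDistIntegral_smul hcont hmeas q w).comp continuous_fst)

end OrbitDistIntegral

theorem continuousSMul_of_measurable_orbit {G C : Type*} [Group G] [MetricSpace G]
    [CompactSpace G] [IsTopologicalGroup G] [MeasurableSpace G] [BorelSpace G]
    [MetricSpace C] [CompactSpace C] [MeasurableSpace C] [BorelSpace C] [MulAction G C]
    (hcont : ∀ g : G, Continuous fun z : C => g • z)
    (hmeas : ∀ z : C, Measurable fun g : G => g • z) : ContinuousSMul G C :=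
  ⟨continuous_of_isClosed_graph (isClosed_graph_smul (μ := Measure.haar.inv) hcont hmeas)⟩

section DenseExtension

variable {G X C : Type*} [TopologicalSpace X] [MetricSpace C] {e : X → C}
  {A : G → X → X} {Ahat : G → C → C}

theorem measurable_apply_of_denseRange [TopologicalSpace G] [MeasurableSpace G]
    [OpensMeasurableSpace G] [MeasurableSpace C] [BorelSpace C]
    (he : Continuous e) (he_dense : DenseRange e) (hA : ∀ x, Continuous fun g => A g x)
    (hAhat_cont : ∀ g, Continuous (Ahat g)) (hAhat_ext : ∀ g x, Ahat g (e x) = e (A g x))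
    (c : C) : Measurable fun g => Ahat g c := by
  obtain ⟨y, hy_mem, hy⟩ := mem_closure_iff_seq_limit.1 (he_dense c)
  choose x hx using hy_mem
  rw [← funext hx] at hy
  refine measurable_of_tendsto_metrizable (f := fun m g => e (A g (x m)))
    (fun m => (he.comp (hA (x m))).measurable) (tendsto_pi_nhds.2 fun g => ?_)
  simpa only [Function.comp_def, hAhat_ext] using ((hAhat_cont g).tendsto c).comp hy

abbrev DenseRange.extendMulAction [Monoid G] (he_dense : DenseRange e)
    (hA_one : ∀ x, A 1 x = x) (hA_mul : ∀ g h x, A (g * h) x = A g (A h x))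
    (hAhat_cont : ∀ g, Continuous (Ahat g)) (hAhat_ext : ∀ g x, Ahat g (e x) = e (A g x)) :
    MulAction G C where
  smul := Ahat
  one_smul c := congrFun (he_dense.equalizer (hAhat_cont 1) continuous_id
    (funext fun x => by simp [hAhat_ext, hA_one])) c
  mul_smul g h c := congrFun (he_dense.equalizer (hAhat_cont (g * h))
    ((hAhat_cont g).comp (hAhat_cont h)) (funext fun x => by simp [hAhat_ext, hA_mul])) c

end DenseExtension

/-- **Extending group actions to metric compactifications.**
If a compact metric group `G` acts continuously on a metric space `X`, and `(C, d)`
is a metric compactification of `X` (via a topological embedding `e : X → C` with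
dense image) such that every map `A(g, ·)` extends continuously to a map
`Ahat g : C → C`, then `(g, c) ↦ Ahat g c` is a continuous group action of `G` on `C`. -/
theorem extend_group_action_to_metric_compactification
    {X : Type*} [MetricSpace X]
    {G : Type*} [MetricSpace G] [CompactSpace G] [Group G] [IsTopologicalGroup G]
    (A : G → X → X)
    (hA_cont : Continuous fun p : G × X => A p.1 p.2)
    (hA_one : ∀ x : X, A 1 x = x)
    (hA_mul : ∀ (g h : G) (x : X), A (g * h) x = A g (A h x))
    {C : Type*} [MetricSpace C] [CompactSpace C]
    (e : X → C) (he : Topology.IsEmbedding e) (he_dense : DenseRange e)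
    (Ahat : G → C → C)
    (hAhat_cont : ∀ g : G, Continuous (Ahat g))
    (hAhat_ext : ∀ (g : G) (x : X), Ahat g (e x) = e (A g x)) :
    Continuous (fun p : G × C => Ahat p.1 p.2) ∧
      (∀ c : C, Ahat 1 c = c) ∧
      (∀ (g h : G) (c : C), Ahat (g * h) c = Ahat g (Ahat h c)) := by
  let := he_dense.extendMulAction hA_one hA_mul hAhat_cont hAhat_ext
  borelize G C
  have hmeas := measurable_apply_of_denseRange he.continuous he_dense
    (fun x => hA_cont.comp (Continuous.prodMk_left x)) hAhat_cont hAhat_ext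
  exact ⟨(continuousSMul_of_measurable_orbit hAhat_cont hmeas).continuous_smul, one_smul G,
    mul_smul⟩
end

section
/- Let X be a metric space, G a compact metric topological group acting continuously on X, and (C, d) a compact metric space with a topological embedding e : X → C having dense image. Assume that for every g ∈ G there is a continuous map Âg : C → C with Âg ∘ e = e ∘ A(g,·). Then the extended action is jointly sequentially continuous at the identity in the following sense: for every sequence (gᵢ) in G converging to the identity e_G and every sequence (xᵢ) in X with e(xᵢ) → c in C, one has e(A(gᵢ, xᵢ)) → c in C. -/
/-!
The orbit maps `h ↦ e (A h xᵢ)` are continuous on `G` and converge pointwise to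
`h ↦ Âh c`. By the Baire category theorem such a sequence is eventually equicontinuous at
some point `h₀`, so `e (A (h₀ gᵢ) xᵢ)` and `e (A h₀ xᵢ)` become uniformly close. Applying the
uniformly continuous map `Â(h₀⁻¹)` to both moves them to `e (A gᵢ xᵢ)` and `e xᵢ`.
-/

open Topology Filter Uniformity

section EventualEquicontinuity

variable {G C : Type*} [PseudoMetricSpace C] {f : ℕ → G → C}

theorem iUnion_setOf_forall_ge_dist_le_eq_univ (hcauchy : ∀ h, CauchySeq fun i => f i h)
    {ε : ℝ} (hε : 0 < ε) : ⋃ N, {h | ∀ i ≥ N, ∀ j ≥ N, dist (f i h) (f j h) ≤ ε} = Set.univ :=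
  Set.eq_univ_of_forall fun h =>
    let ⟨N, hN⟩ := Metric.cauchySeq_iff.mp (hcauchy h) ε hε
    Set.mem_iUnion.mpr ⟨N, fun i hi j hj => (hN i hi j hj).le⟩

variable [TopologicalSpace G]

theorem isClosed_setOf_forall_ge_dist_le (hf : ∀ i, Continuous (f i)) (ε : ℝ) (N : ℕ) :
    IsClosed {h | ∀ i ≥ N, ∀ j ≥ N, dist (f i h) (f j h) ≤ ε} := by
  simp only [Set.ofPred_forall]
  exact isClosed_iInter fun i => isClosed_iInter fun _ => isClosed_iInter fun j =>
    isClosed_iInter fun _ => isClosed_le ((hf i).dist (hf j)) continuous_const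

variable [BaireSpace G]

theorem eventually_residual_eventually_dist_lt (hf : ∀ i, Continuous (f i))
    (hcauchy : ∀ h, CauchySeq fun i => f i h) {ε : ℝ} (hε : 0 < ε) :
    ∀ᶠ h₀ in residual G, ∀ᶠ p in 𝓝 h₀ ×ˢ atTop, dist (f p.2 h₀) (f p.2 p.1) < ε := by
  set F : ℕ → Set G := fun N => {h | ∀ i ≥ N, ∀ j ≥ N, dist (f i h) (f j h) ≤ ε / 3}
  have hdense : Dense (⋃ N, interior (F N)) :=
    dense_iUnion_interior_of_closed (isClosed_setOf_forall_ge_dist_le hf _)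
      (iUnion_setOf_forall_ge_dist_le_eq_univ hcauchy (by positivity))
  filter_upwards [residual_of_dense_open (isOpen_iUnion fun _ => isOpen_interior) hdense]
    with h₀ hh₀
  obtain ⟨N, hN⟩ := Set.mem_iUnion.mp hh₀
  have hnear : ∀ᶠ h in 𝓝 h₀, h ∈ F N ∧ dist (f N h₀) (f N h) < ε / 3 :=
    Filter.Eventually.and (mem_interior_iff_mem_nhds.mp hN) <|
      (Metric.tendsto_nhds.mp ((hf N).tendsto h₀) (ε / 3) (by positivity)).mono fun _ hh => by
        rwa [dist_comm]
  filter_upwards [hnear.prod_mk (eventually_ge_atTop N)]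
    with ⟨h, i⟩ ⟨⟨hhF, hhN⟩, hiN⟩
  calc dist (f i h₀) (f i h)
      ≤ dist (f i h₀) (f N h₀) + dist (f N h₀) (f N h) + dist (f N h) (f i h) :=
        dist_triangle4 _ _ _ _
    _ < ε / 3 + ε / 3 + ε / 3 := by
        have h₀i := (interior_subset hN : h₀ ∈ F N) i hiN N le_rfl
        have hi := hhF N le_rfl i hiN
        linarith
    _ = ε := by ring

theorem eventually_residual_tendsto_uniformity (hf : ∀ i, Continuous (f i))
    (hcauchy : ∀ h, CauchySeq fun i => f i h) :
    ∀ᶠ h₀ in residual G,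
      Tendsto (fun p : G × ℕ => (f p.2 h₀, f p.2 p.1)) (𝓝 h₀ ×ˢ atTop) (𝓤 C) := by
  simp only [Metric.uniformity_basis_dist_inv_nat_succ.tendsto_right_iff, Set.mem_ofPred_eq]
  exact eventually_countable_forall.mpr fun n =>
    (eventually_residual_eventually_dist_lt hf hcauchy Nat.one_div_pos_of_nat).mono
      fun _ h _ => h

end EventualEquicontinuity

theorem extended_action_seq_continuous_at_identity_general
    {X : Type*} [MetricSpace X]
    {G : Type*} [MetricSpace G] [CompactSpace G] [Group G] [IsTopologicalGroup G]
    (A : G → X → X)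
    (hA_cont : Continuous fun p : G × X => A p.1 p.2)
    (hA_one : ∀ x : X, A 1 x = x)
    (hA_mul : ∀ (g h : G) (x : X), A (g * h) x = A g (A h x))
    {C : Type*} [MetricSpace C] [CompactSpace C]
    (e : X → C) (he : Topology.IsEmbedding e)
    (hext : ∀ g : G, ∃ Ahat : C → C, Continuous Ahat ∧ ∀ x : X, Ahat (e x) = e (A g x)) :
    ∀ (g : ℕ → G) (x : ℕ → X) (c : C),
      Tendsto g atTop (𝓝 (1 : G)) →
      Tendsto (fun i => e (x i)) atTop (𝓝 c) →
      Tendsto (fun i => e (A (g i) (x i))) atTop (𝓝 c) := by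
  choose Ahat hAhat_cont hAhat_e using hext
  intro g x c hg hx
  set f : ℕ → G → C := fun i h => e (A h (x i))
  have hf (i : ℕ) : Continuous (f i) :=
    he.continuous.comp (hA_cont.comp (continuous_id.prodMk continuous_const))
  have hcauchy (h : G) : CauchySeq fun i => f i h := by
    simpa only [f, ← hAhat_e, Function.comp_def] using (((hAhat_cont h).tendsto c).comp hx).cauchySeq
  obtain ⟨h₀, hh₀⟩ := (dense_of_mem_residual
    (eventually_residual_tendsto_uniformity hf hcauchy)).nonempty
  have hmul : Tendsto (h₀ * g ·) atTop (𝓝 h₀) := by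
    simpa using tendsto_const_nhds.mul hg
  have hclose := Tendsto.comp (CompactSpace.uniformContinuous_of_continuous (hAhat_cont h₀⁻¹))
    (hh₀.comp (hmul.prodMk tendsto_id))
  refine hx.congr_uniformity ?_
  simpa [f, Function.comp_def, hAhat_e, ← hA_mul, hA_one] using hclose

/-- **Joint sequential continuity at the identity of the extended action.**
If a compact metric group `G` acts continuously on a metric space `X`, `(C, d)` is a
compact metric space with a topological embedding `e : X → C` having dense image,
and every `A(g, ·)` extends continuously to `C`, then for every sequence `gᵢ → 1` in `G`
and every sequence `xᵢ` in `X` with `e xᵢ → c` in `C`, one has `e (A gᵢ xᵢ) → c`. -/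
theorem extended_action_seq_continuous_at_identity
    {X : Type*} [MetricSpace X]
    {G : Type*} [MetricSpace G] [CompactSpace G] [Group G] [IsTopologicalGroup G]
    (A : G → X → X)
    (hA_cont : Continuous fun p : G × X => A p.1 p.2)
    (hA_one : ∀ x : X, A 1 x = x)
    (hA_mul : ∀ (g h : G) (x : X), A (g * h) x = A g (A h x))
    {C : Type*} [MetricSpace C] [CompactSpace C]
    (e : X → C) (he : Topology.IsEmbedding e) (he_dense : DenseRange e)
    (hext : ∀ g : G, ∃ Ahat : C → C, Continuous Ahat ∧ ∀ x : X, Ahat (e x) = e (A g x)) :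
    ∀ (g : ℕ → G) (x : ℕ → X) (c : C),
      Tendsto g atTop (𝓝 (1 : G)) →
      Tendsto (fun i => e (x i)) atTop (𝓝 c) →
      Tendsto (fun i => e (A (g i) (x i))) atTop (𝓝 c) :=
  extended_action_seq_continuous_at_identity_general A hA_cont hA_one hA_mul e he hext
end

section
/- Let C be a compactification of ℕ (a compact Hausdorff space containing ℕ with the discrete topology as a dense open subspace) and let Y = C × Z₂. Since ℕ is not compact, the remainder C \ ℕ is nonempty. Let f̂ᵢ : Y → Y be the homeomorphism equal to fᵢ on ℕ × Z₂ and the identity elsewhere. Then the sequence (f̂ᵢ) does NOT converge to the identity in the compact-open topology on the space of continuous maps Y → Y; concretely, for every α ∈ C \ ℕ and every neighborhood N of (α, 0) in Y, and every N₀ ∈ ℕ, there exist n > N₀ and a point p ∈ N with f̂ₙ(p) ≠ p. -/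
open Topology Filter

instance : TopologicalSpace (ZMod 2) := ⊥
instance : DiscreteTopology (ZMod 2) := ⟨rfl⟩

/-- **The extensions `fhat i` do not converge to the identity.**
Let `C` be a compactification of `ℕ` via the embedding `ι`, and `Y = C × ZMod 2`.
Let `fhat i` agree with `fᵢ` on `ℕ × ZMod 2` and fix the remainder pointwise.
The remainder `C \ ℕ` is nonempty (since `ℕ` is not compact), and for every point
`α` of the remainder, every neighborhood `N` of `(α, 0)` and every `N₀` there exist
`n > N₀` and `p ∈ N` with `fhat n p ≠ p`; hence `fhat i` does not converge to the
identity in the compact-open topology. -/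
theorem extensions_not_tendsto_id
    {C : Type*} [TopologicalSpace C] [CompactSpace C] [T2Space C]
    (ι : ℕ → C) (hι : Topology.IsEmbedding ι) (hι_dense : DenseRange ι)
    (hι_open : IsOpen (Set.range ι))
    (fhat : ℕ → C × ZMod 2 → C × ZMod 2)
    (hfhat_ext : ∀ (i n : ℕ) (z : ZMod 2),
      fhat i (ι n, z) = if n = i then (ι n, z + 1) else (ι n, z))
    (hfhat_fix : ∀ (i : ℕ) (α : C), α ∉ Set.range ι →
      ∀ z : ZMod 2, fhat i (α, z) = (α, z)) :
    (Set.range ι)ᶜ.Nonempty ∧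
      ∀ α : C, α ∉ Set.range ι →
        ∀ N ∈ 𝓝 ((α, (0 : ZMod 2)) : C × ZMod 2),
          ∀ N₀ : ℕ, ∃ n > N₀, ∃ p ∈ N, fhat n p ≠ p := by
  constructor
  · by_contra h
    rw [Set.not_nonempty_iff_eq_empty, Set.compl_empty_iff] at h
    have hc : IsCompact (Set.range ι) := h ▸ isCompact_univ
    rw [← Set.image_univ, ← hι.isCompact_iff] at hc
    exact (noncompact_univ ℕ) hc
  · intro α hα N hN N₀
    rcases mem_nhds_prod_iff.mp hN with ⟨U, hU, V, hV, hUV⟩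
    have hF : IsClosed (ι '' {m | m ≤ N₀}) :=
      (Set.Finite.image ι (Set.finite_Iic N₀)).isClosed
    have hαF : α ∉ ι '' {m | m ≤ N₀} := fun ⟨m, _, hm⟩ => hα ⟨m, hm⟩
    have hU' : U \ ι '' {m | m ≤ N₀} ∈ 𝓝 α :=
      Filter.inter_mem hU (hF.isOpen_compl.mem_nhds hαF)
    have hcl : α ∈ closure (Set.range ι) := hι_dense α
    rcases mem_closure_iff_nhds.mp hcl _ hU' with ⟨x, ⟨hxU, hxF⟩, n, rfl⟩
    have hn : n > N₀ := by
      by_contra hle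
      exact hxF ⟨n, not_lt.mp hle, rfl⟩
    refine ⟨n, hn, (ι n, 0), hUV ⟨hxU, mem_of_mem_nhds hV⟩, ?_⟩
    rw [hfhat_ext n n 0, if_pos rfl]
    intro h
    have : (0 : ZMod 2) + 1 = 0 := congrArg Prod.snd h
    exact absurd this (by decide)
end

section
/- Let C be a compactification of ℕ (a compact Hausdorff space containing ℕ with the discrete topology as a dense open subspace) such that every function F : ℕ → Bool extends to a continuous function F̂ : C → Bool (Bool discrete). Then C is homeomorphic to the Stone–Čech compactification βℕ of ℕ, via a homeomorphism βℕ → C extending the identity on ℕ. -/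
open Topology Filter

-- every point of StoneCech ℕ is a limit of an ultrafilter on ℕ
lemma exists_ultrafilter_tendsto (x : StoneCech ℕ) :
    ∃ u : Ultrafilter ℕ, Tendsto stoneCechUnit (u : Filter ℕ) (𝓝 x) := by
  have hx : x ∈ closure (Set.range (stoneCechUnit : ℕ → StoneCech ℕ)) := by
    rw [denseRange_stoneCechUnit.closure_range]; trivial
  rw [mem_closure_iff_ultrafilter] at hx
  obtain ⟨U, hU, hUx⟩ := hx
  have h : stoneCechUnit '' Set.univ ∈ U := by rwa [Set.image_univ]
  refine ⟨Ultrafilter.ofComapInfPrincipal h, ?_⟩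
  have := Ultrafilter.ofComapInfPrincipal_eq_of_map h
  rw [Tendsto, ← Ultrafilter.coe_map, this]
  exact hUx

lemma val_along (u : Ultrafilter ℕ) {x : StoneCech ℕ}
    (hu : Tendsto stoneCechUnit (u : Filter ℕ) (𝓝 x))
    {f : ℕ → Bool} {g : StoneCech ℕ → Bool} (hg : Continuous g)
    (hgf : ∀ n, g (stoneCechUnit n) = f n) :
    {n | f n = g x} ∈ u := by
  have : Tendsto f (u : Filter ℕ) (𝓝 (g x)) := by
    have := (hg.tendsto x).comp hu
    simpa [Function.comp, hgf] using this
  rw [nhds_discrete, tendsto_pure] at this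
  exact this

/-- **A compactification of `ℕ` in which every two-valued function extends is `βℕ`.**
Let `C` be a compactification of `ℕ` (compact Hausdorff, containing `ℕ` with the
discrete topology as a dense open subspace via `ι`) such that every `F : ℕ → Bool`
extends to a continuous `Fhat : C → Bool` (`Bool` discrete).  Then `C` is homeomorphic
to the Stone–Čech compactification `βℕ` via a homeomorphism extending the identity
on `ℕ`. -/
theorem compactification_is_stoneCech
    {C : Type*} [TopologicalSpace C] [CompactSpace C] [T2Space C]
    (ι : ℕ → C) (hι : Topology.IsEmbedding ι) (hι_dense : DenseRange ι)
    (hι_open : IsOpen (Set.range ι))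
    (hext : ∀ F : ℕ → Bool, ∃ Fhat : C → Bool,
      Continuous Fhat ∧ ∀ n : ℕ, Fhat (ι n) = F n) :
    ∃ h : StoneCech ℕ ≃ₜ C, ∀ n : ℕ, h (stoneCechUnit n) = ι n := by
  classical
  have hcι : Continuous ι := continuous_of_discreteTopology
  set φ : StoneCech ℕ → C := stoneCechExtend hcι with hφ
  have hφc : Continuous φ := continuous_stoneCechExtend hcι
  have hφext : ∀ n, φ (stoneCechUnit n) = ι n := fun n =>
    congrFun (stoneCechExtend_extends hcι) n
  -- injectivity
  have hinj : Function.Injective φ := by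
    intro x y hxy
    obtain ⟨u, hu⟩ := exists_ultrafilter_tendsto x
    obtain ⟨v, hv⟩ := exists_ultrafilter_tendsto y
    by_contra hne
    have huv : u ≠ v := by
      rintro rfl
      exact hne (tendsto_nhds_unique hu hv)
    obtain ⟨A, hAu, hAv⟩ : ∃ A : Set ℕ, A ∈ u ∧ A ∉ v := by
      by_contra h
      push_neg at h
      exact huv (Ultrafilter.eq_of_le fun s hs => h s hs).symm
    have hAcv : Aᶜ ∈ v := Ultrafilter.compl_mem_iff_notMem.mpr hAv
    obtain ⟨Fhat, hFc, hFe⟩ := hext (fun n => decide (n ∈ A))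
    have hg : Continuous (Fhat ∘ φ) := hFc.comp hφc
    have hgf : ∀ n, (Fhat ∘ φ) (stoneCechUnit n) = decide (n ∈ A) := by
      intro n; simp only [Function.comp_apply, hφext, hFe]
    have hx := val_along u hu hg hgf
    have hy := val_along v hv hg hgf
    have hxt : Fhat (φ x) = true := by
      obtain ⟨n, hnA, hn⟩ := Ultrafilter.nonempty_of_mem (inter_mem hAu hx)
      simp only [Set.mem_setOf_eq, Function.comp_apply] at hn
      rw [← hn]; simpa using hnA
    have hyt : Fhat (φ y) = false := by
      obtain ⟨n, hnA, hn⟩ := Ultrafilter.nonempty_of_mem (inter_mem hAcv hy)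
      simp only [Set.mem_setOf_eq, Function.comp_apply] at hn
      rw [← hn]; simpa using hnA
    rw [hxy, hyt] at hxt
    exact Bool.false_ne_true hxt
  -- surjectivity
  have hsurj : Function.Surjective φ := by
    have hclosed : IsClosed (Set.range φ) := (isCompact_range hφc).isClosed
    have hsub : Set.range ι ⊆ Set.range φ := by
      rintro _ ⟨n, rfl⟩; exact ⟨stoneCechUnit n, hφext n⟩
    have huniv : Set.range φ = Set.univ := by
      apply Set.eq_univ_of_univ_subset
      calc Set.univ = closure (Set.range ι) := hι_dense.closure_range.symm
        _ ⊆ closure (Set.range φ) := closure_mono hsub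
        _ = Set.range φ := hclosed.closure_eq
    exact Set.range_eq_univ.mp huniv
  exact ⟨Continuous.homeoOfEquivCompactToT2 (f := Equiv.ofBijective φ ⟨hinj, hsurj⟩) hφc,
    hφext⟩
end

section
/- Every compact metrizable subset of the Stone–Čech compactification βℕ of the discrete space ℕ is finite. Equivalently, every closed subset of βℕ that is metrizable (in the subspace topology) is finite. -/
/-!
In an extremally disconnected space the closures of disjoint open sets are disjoint, so a sequence
whose terms lie in pairwise disjoint open sets cannot converge: its limit would lie in the closures
of both the union over the even and the union over the odd indices. In a Hausdorff space every
convergent sequence that is not eventually constant has a subsequence of this kind, so convergent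
sequences in `βℕ` are eventually constant, whereas an infinite compact metrizable set contains an
injective convergent sequence.
-/

open Topology Filter Set Function

theorem Filter.extraction_forall_lt_of_eventually {P : ℕ → ℕ → Prop}
    (h : ∀ m, ∀ᶠ n in atTop, P m n) :
    ∃ φ : ℕ → ℕ, StrictMono φ ∧ ∀ m n, m < n → P (φ m) (φ n) := by
  obtain ⟨φ, -, hφ⟩ := exists_seq_of_forall_finset_exists (fun _ ↦ True)
    (fun m n ↦ m < n ∧ P m n) fun s _ ↦
      ((s.eventually_all.2 fun m _ ↦ (eventually_gt_atTop m).and (h m)).exists).imp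
        fun n hn ↦ ⟨trivial, hn⟩
  exact ⟨φ, strictMono_nat_of_lt_succ fun k ↦ (hφ k (k + 1) k.lt_succ_self).1,
    fun m n hmn ↦ (hφ m n hmn).2⟩

section

variable {X : Type*} [TopologicalSpace X]

theorem Filter.Tendsto.exists_subseq_mem_pairwise_disjoint_isOpen [T2Space X] {v : ℕ → X} {x : X}
    (hv : Tendsto v atTop (𝓝 x)) (hne : ∀ n, v n ≠ x) :
    ∃ φ : ℕ → ℕ, StrictMono φ ∧ ∃ U : ℕ → Set X, (∀ k, IsOpen (U k)) ∧
      Pairwise (Disjoint on U) ∧ ∀ k, v (φ k) ∈ U k := by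
  choose U V hUo hVo hvU hxV hUV using fun n ↦ t2_separation (hne n)
  obtain ⟨φ, hφ, hφV⟩ := extraction_forall_lt_of_eventually fun m ↦
    hv.eventually ((hVo m).mem_nhds (hxV m))
  refine ⟨φ, hφ, fun k ↦ U (φ k) ∩ ⋂ j < k, V (φ j), fun k ↦ ?_, ?_, fun k ↦ ?_⟩
  · exact (hUo _).inter ((finite_Iio k).isOpen_biInter fun j _ ↦ hVo _)
  · refine (pairwise_disjoint_on _).2 fun j k hjk ↦ ?_
    exact ((hUV (φ j)).mono inter_subset_left
      (inter_subset_right.trans (biInter_subset_of_mem hjk)))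
  · exact ⟨hvU _, mem_iInter₂.2 fun j hjk ↦ hφV j k hjk⟩

theorem ExtremallyDisconnected.not_tendsto_of_mem_pairwise_disjoint_isOpen
    [ExtremallyDisconnected X] {U : ℕ → Set X} (hUo : ∀ k, IsOpen (U k))
    (hU : Pairwise (Disjoint on U)) {w : ℕ → X} (hw : ∀ k, w k ∈ U k) (x : X) :
    ¬ Tendsto w atTop (𝓝 x) := by
  intro hwx
  have hEven : StrictMono fun k ↦ 2 * k := fun a b _ ↦ show 2 * a < 2 * b by omega
  have hOdd : StrictMono fun k ↦ 2 * k + 1 := fun a b _ ↦ show 2 * a + 1 < 2 * b + 1 by omega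
  have hdisj : Disjoint (⋃ k, U (2 * k)) (⋃ k, U (2 * k + 1)) :=
    disjoint_iUnion_left.2 fun _ ↦ disjoint_iUnion_right.2 fun _ ↦ hU (by omega)
  refine (ExtremallyDisconnected.disjoint_closure_of_disjoint_isOpen hdisj
    (isOpen_iUnion fun _ ↦ hUo _) (isOpen_iUnion fun _ ↦ hUo _)).ne_of_mem
    (mem_closure_of_tendsto (hwx.comp hEven.tendsto_atTop)
      (.of_forall fun k ↦ mem_iUnion_of_mem k (hw _)))
    (mem_closure_of_tendsto (hwx.comp hOdd.tendsto_atTop)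
      (.of_forall fun k ↦ mem_iUnion_of_mem k (hw _))) rfl

theorem ExtremallyDisconnected.eventually_eq_of_tendsto [ExtremallyDisconnected X] [T2Space X]
    {v : ℕ → X} {x : X} (hv : Tendsto v atTop (𝓝 x)) : ∀ᶠ n in atTop, v n = x := by
  by_contra h
  obtain ⟨ψ, hψ, hψx⟩ := extraction_of_frequently_atTop (not_eventually.1 h)
  obtain ⟨φ, hφ, U, hUo, hU, hvU⟩ :=
    (hv.comp hψ.tendsto_atTop).exists_subseq_mem_pairwise_disjoint_isOpen hψx
  exact not_tendsto_of_mem_pairwise_disjoint_isOpen hUo hU hvU x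
    ((hv.comp hψ.tendsto_atTop).comp hφ.tendsto_atTop)

theorem IsSeqCompact.finite_of_extremallyDisconnected [ExtremallyDisconnected X] [T2Space X]
    {s : Set X} (hs : IsSeqCompact s) : s.Finite := by
  by_contra hinf
  let u : ℕ ↪ s := Set.Infinite.natEmbedding s hinf
  obtain ⟨x, -, φ, hφ, hux⟩ := hs fun n ↦ (u n).2
  obtain ⟨N, hN⟩ := (ExtremallyDisconnected.eventually_eq_of_tendsto hux).exists_forall_of_atTop
  have : φ N = φ (N + 1) :=
    u.injective (Subtype.val_injective ((hN N le_rfl).trans (hN (N + 1) N.le_succ).symm))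
  exact (hφ N.lt_succ_self).ne this

end

theorem IsCompact.isSeqCompact_of_firstCountableTopology {X : Type*} [TopologicalSpace X]
    {s : Set X} (hs : IsCompact s) [FirstCountableTopology s] : IsSeqCompact s := by
  have := isCompact_iff_compactSpace.1 hs
  exact isSeqCompact_iff_seqCompactSpace.2 inferInstance

instance {X : Type*} [TopologicalSpace X] [DiscreteTopology X] :
    ExtremallyDisconnected (StoneCech X) :=
  CompactT2.Projective.extremallyDisconnected StoneCech.projective

/-- **Compact metrizable subsets of `βℕ` are finite.**
Every compact subset of the Stone–Čech compactification of the discrete space `ℕ`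
that is metrizable in the subspace topology is finite; equivalently, every closed
metrizable subset of `βℕ` is finite. -/
theorem compact_metrizable_subset_of_stoneCech_finite :
    (∀ s : Set (StoneCech ℕ), IsCompact s → TopologicalSpace.MetrizableSpace s →
      s.Finite) ∧
    (∀ s : Set (StoneCech ℕ), IsClosed s → TopologicalSpace.MetrizableSpace s →
      s.Finite) := by
  have hcompact : ∀ s : Set (StoneCech ℕ), IsCompact s → TopologicalSpace.MetrizableSpace s →
      s.Finite := fun _ hs _ ↦
    hs.isSeqCompact_of_firstCountableTopology.finite_of_extremallyDisconnected
  exact ⟨hcompact, fun s hs ↦ hcompact s hs.isCompact⟩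
end

section
/- Let C be a compactification of ℕ (a compact Hausdorff space containing ℕ with the discrete topology as a dense open subspace) and Y = C × Z₂. Then there is no continuous group action Â of the compact group G_s = ∏_{i ∈ ℕ} Z₂ (product topology) on Y whose restriction to ℕ × Z₂ is the action Â(γ, (n,z)) = (n, z ⊕ γ(n)). In particular, the free action of G_s on ℕ × Z₂ does not extend to a continuous group action on any compactification of ℕ × Z₂ of the form C × Z₂. -/
open Topology Filter

/-- **The free action of `G_s = ∏_{i ∈ ℕ} ZMod 2` on `ℕ × ZMod 2` extends to no
compactification of the form `C × ZMod 2`.**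
Let `C` be a compactification of `ℕ` via the embedding `ι` and `Y = C × ZMod 2`.
There is no jointly continuous group action `Ahat` of the compact group
`G_s = ℕ → ZMod 2` (product topology, pointwise addition) on `Y` whose restriction
to `ℕ × ZMod 2` is `(γ, (n, z)) ↦ (n, z + γ n)`. -/
theorem no_extension_of_product_action
    {C : Type*} [TopologicalSpace C] [CompactSpace C] [T2Space C]
    (ι : ℕ → C) (hι : Topology.IsEmbedding ι) (hι_dense : DenseRange ι)
    (hι_open : IsOpen (Set.range ι)) :
    ¬ ∃ Ahat : (ℕ → ZMod 2) → C × ZMod 2 → C × ZMod 2,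
        Continuous (fun p : (ℕ → ZMod 2) × (C × ZMod 2) => Ahat p.1 p.2) ∧
        (∀ y : C × ZMod 2, Ahat 0 y = y) ∧
        (∀ (γ δ : ℕ → ZMod 2) (y : C × ZMod 2), Ahat (γ + δ) y = Ahat γ (Ahat δ y)) ∧
        (∀ (γ : ℕ → ZMod 2) (n : ℕ) (z : ZMod 2), Ahat γ (ι n, z) = (ι n, z + γ n)) := by
  rintro ⟨A, hcont, h0, hadd, hres⟩
  -- find a point outside the range of ι
  obtain ⟨x, hx⟩ : ∃ x, x ∉ Set.range ι := by
    by_contra h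
    push_neg at h
    have hope : Topology.IsOpenEmbedding ι := ⟨hι, hι_open⟩
    have hop : ∀ c : C, IsOpen ({c} : Set C) := by
      intro c
      obtain ⟨n, rfl⟩ := h c
      have himg : ι '' {n} = {ι n} := Set.image_singleton
      rw [← himg]
      exact hope.isOpenMap _ (isOpen_discrete _)
    obtain ⟨t, ht⟩ := isCompact_univ.elim_finite_subcover (fun c : C => ({c} : Set C))
      hop (by intro y _; simp)
    have hsub : Set.range ι ⊆ ↑t := by
      intro y hy
      have := ht (Set.mem_univ y)
      simpa using this
    exact Set.infinite_range_of_injective hι.injective (t.finite_toSet.subset hsub)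
  set f : ((ℕ → ZMod 2) × (C × ZMod 2)) → ZMod 2 := fun p => (A p.1 p.2).2 with hf
  have hfc : Continuous f := continuous_snd.comp hcont
  have hW : IsOpen (f ⁻¹' {0}) := hfc.isOpen_preimage _ (isOpen_discrete _)
  have hmem : ((0 : ℕ → ZMod 2), ((x, 0) : C × ZMod 2)) ∈ f ⁻¹' {0} := by
    simp [hf, h0]
  obtain ⟨U, V, hU, hV, hU0, hVx, hUV⟩ := isOpen_prod_iff.1 hW _ _ hmem
  obtain ⟨I, u, hu, hpi⟩ := isOpen_pi_iff.1 hU 0 hU0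
  obtain ⟨V₁, V₂, hV₁, hV₂, hxV₁, h0V₂, hV₁₂⟩ := isOpen_prod_iff.1 hV x 0 hVx
  have hclosed : IsClosed (ι '' ↑I) := (Set.toFinite _).isClosed
  have hxW : x ∈ V₁ \ ι '' ↑I := ⟨hxV₁, fun h => hx (Set.image_subset_range _ _ h)⟩
  have hopen : IsOpen (V₁ \ ι '' ↑I) := hV₁.sdiff hclosed
  obtain ⟨n, hn⟩ := hι_dense.exists_mem_open hopen ⟨x, hxW⟩
  have hnI : n ∉ I := fun h => hn.2 ⟨n, h, rfl⟩
  set γ : ℕ → ZMod 2 := Pi.single n 1 with hγ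
  have hγU : γ ∈ U := by
    apply hpi
    intro i hi
    have hne : i ≠ n := fun h => hnI (h ▸ hi)
    have : γ i = 0 := Pi.single_eq_of_ne hne 1
    rw [this]
    exact (hu i hi).2
  have hyV : ((ι n, 0) : C × ZMod 2) ∈ V := hV₁₂ ⟨hn.1, h0V₂⟩
  have h0' : f (γ, (ι n, 0)) = 0 := hUV ⟨hγU, hyV⟩
  have h1 : f (γ, (ι n, 0)) = 1 := by
    simp [hf, hres, hγ, Pi.single_eq_same]
  rw [h0'] at h1
  exact absurd h1 (by decide)
end
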